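/- arXiv:1901.06550 — 2 statements merged into one kernel-verified Lean document; each statement's English description precedes it below -/
import Mathlib

section
/- Let d ≥ 3 be an integer. There exists a constant C > 0 such that for every N > 0 there is a constant C_N > 0 with 0 ≤ g_t(x,y) ≤ C_N · t^{−d/2} · e^{−C|x−y|²/t} · (1 + √t/ρ(x))^{−N} · (1 + √t/ρ(y))^{−N} for all t > 0 and all x, y ∈ ℝ^d. -/
open MeasureTheory Real Set ENNReal

noncomputable section

abbrev Euc (d : ℕ) := EuclideanSpace ℝ (Fin d)

namespace Hermite

variable {d : ℕ}

/-- The critical radius function `ρ(x) = 1/(1+|x|)`. -/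
def rho (x : Euc d) : ℝ := 1 / (1 + ‖x‖)

/-- The Hermite heat kernel (Mehler kernel). -/
def heatKernel (t : ℝ) (x y : Euc d) : ℝ :=
  (2 * π * Real.sinh (2 * t)) ^ (-(d : ℝ) / 2) *
    Real.exp (-(1 / 4) *
      (‖x + y‖ ^ 2 * Real.tanh t + ‖x - y‖ ^ 2 * (Real.cosh t / Real.sinh t)))

/-- The Hermite heat semigroup `T_t f(x) = ∫ g_t(x,y) f(y) dy`. -/
def heatOp (f : Euc d → ℝ) (t : ℝ) (x : Euc d) : ℝ :=
  ∫ y, heatKernel t x y * f y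

/-- The Poisson kernel associated with the Hermite operator. -/
def poissonKernel (t : ℝ) (x y : Euc d) : ℝ :=
  (t / (2 * Real.sqrt π)) *
    ∫ u in Ioi (0 : ℝ), Real.exp (-(t ^ 2) / (4 * u)) * heatKernel u x y * u ^ (-(3 : ℝ) / 2)

/-- The Poisson semigroup `P_t f(x) = ∫ p_t(x,y) f(y) dy`. -/
def poissonOp (f : Euc d → ℝ) (t : ℝ) (x : Euc d) : ℝ :=
  ∫ y, poissonKernel t x y * f y

/-- The heat maximal function `M_L f(x) = sup_{t>0} |T_t f(x)|` (with values in `ℝ≥0∞`). -/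
def heatMax (f : Euc d → ℝ) (x : Euc d) : ℝ≥0∞ :=
  ⨆ (t : ℝ) (_ : 0 < t), ENNReal.ofReal |heatOp f t x|

/-- The nontangential Poisson maximal function
`f_L^*(x) = sup { |P_t f(y)| : t > 0, |x - y| < t }`. -/
def ntMax (f : Euc d → ℝ) (x : Euc d) : ℝ≥0∞ :=
  ⨆ (y : Euc d) (t : ℝ) (_ : dist x y < t), ENNReal.ofReal |poissonOp f t y|

/-- `|∇_L P_t f(y)|² = |∂_t P_t f(y)|² + Σ_j |(∂_{y_j} + y_j) P_t f(y)|²`. -/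
def gradSq (f : Euc d → ℝ) (t : ℝ) (y : Euc d) : ℝ :=
  (deriv (fun s => poissonOp f s y) t) ^ 2 +
    ∑ j : Fin d,
      (fderiv ℝ (fun z => poissonOp f t z) y (EuclideanSpace.single j 1)
        + y j * poissonOp f t y) ^ 2

/-- The Lusin integrand `t^{1-d} |∇_L P_t f(y)|²` at `q = (y,t)`. -/
def lusinIntegrand (f : Euc d → ℝ) (q : Euc d × ℝ) : ℝ≥0∞ :=
  ENNReal.ofReal (q.2 ^ ((1 : ℝ) - d) * gradSq f q.2 q.1)

/-- The cone `Γ(x) = {(y,t) : |x-y| < t}`. -/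
def cone (x : Euc d) : Set (Euc d × ℝ) := {q | dist x q.1 < q.2}

/-- The Lusin area integral `S f(x)`. -/
def lusinS (f : Euc d → ℝ) (x : Euc d) : ℝ≥0∞ :=
  (∫⁻ q in cone x, lusinIntegrand f q) ^ (1 / 2 : ℝ)

/-- The `L^p` quasi-norm of an `ℝ≥0∞`-valued function. -/
def lpNorm (p : ℝ) (g : Euc d → ℝ≥0∞) : ℝ≥0∞ :=
  (∫⁻ x, g x ^ p) ^ (1 / p)


set_option maxHeartbeats 1000000

private lemma sinh_le_mul_cosh {t : ℝ} (ht : 0 ≤ t) : Real.sinh t ≤ t * Real.cosh t := by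
  have h : MonotoneOn (fun s : ℝ => s * Real.cosh s - Real.sinh s) (Ici 0) := by
    apply monotoneOn_of_deriv_nonneg (convex_Ici 0)
    · fun_prop
    · intro s hs
      apply DifferentiableAt.differentiableWithinAt
      fun_prop
    · intro s hs
      rw [interior_Ici, mem_Ioi] at hs
      have : deriv (fun s : ℝ => s * Real.cosh s - Real.sinh s) s
          = s * Real.sinh s := by
        rw [deriv_fun_sub (by fun_prop) (by fun_prop), deriv_fun_mul (by fun_prop) (by fun_prop)]
        simp [Real.deriv_cosh]
        try ring
      rw [this]
      exact mul_nonneg hs.le (by simpa using hs.le)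
  have h0 := h (self_mem_Ici) ht ht
  simp at h0
  linarith

private lemma sinh2_ge {t : ℝ} (ht : 0 ≤ t) : t * Real.exp t ≤ Real.sinh (2*t) := by
  rw [Real.sinh_two_mul]
  have h1 : t ≤ Real.sinh t := by simpa using ht
  have h2 : Real.exp t / 2 ≤ Real.cosh t := by
    rw [Real.cosh_eq]; have := Real.exp_pos (-t); linarith
  have h3 : 0 ≤ Real.sinh t := by simpa using ht
  nlinarith [Real.exp_pos t]

private lemma rpow_le_exp_aux {a ε u : ℝ} (ha : 0 < a) (hε : 0 < ε) (hu : 0 ≤ u) :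
    u ^ a ≤ (a/ε)^a * Real.exp (ε*u) := by
  rcases eq_or_lt_of_le hu with h | hu'
  · rw [← h, Real.zero_rpow ha.ne']
    positivity
  · have hv : 0 < u * ε / a := by positivity
    have key : u = (a/ε) * (u * ε / a) := by field_simp
    calc u ^ a = (a/ε) ^ a * (u * ε / a) ^ a := by
          rw [← Real.mul_rpow (by positivity) hv.le, ← key]
      _ ≤ (a/ε)^a * Real.exp (ε*u) := by
          apply mul_le_mul_of_nonneg_left _ (by positivity)
          rw [Real.rpow_def_of_pos hv]
          apply Real.exp_le_exp.mpr
          have hl := Real.log_le_sub_one_of_pos hv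
          have : Real.log (u * ε / a) * a ≤ (u * ε / a) * a := by
            apply mul_le_mul_of_nonneg_right _ ha.le
            linarith
          calc Real.log (u * ε / a) * a ≤ (u * ε / a) * a := this
            _ = ε * u := by field_simp

private lemma tanh_ge {t : ℝ} (ht : 0 < t) : min t 1 / 2 ≤ Real.tanh t := by
  rw [Real.tanh_eq_sinh_div_cosh, le_div_iff₀ (Real.cosh_pos t)]
  rcases le_total t 1 with h | h
  · rw [min_eq_left h]
    have h1 : t ≤ Real.sinh t := by simpa using ht.le
    have h2 : Real.cosh t ≤ 2 := by
      rw [Real.cosh_eq]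
      have e1 : Real.exp t ≤ Real.exp 1 := Real.exp_le_exp.mpr h
      have e2 : Real.exp (-t) ≤ 1 := Real.exp_le_one_iff.mpr (by linarith)
      have e3 : Real.exp 1 < 2.7182818286 := Real.exp_one_lt_d9
      linarith
    nlinarith
  · rw [min_eq_right h]
    rw [Real.sinh_eq, Real.cosh_eq]
    have h1 : Real.exp t * Real.exp (-t) = 1 := by
      rw [← Real.exp_add]; simp
    have h2 : 1 + 2*t ≤ Real.exp (2*t) := by
      have := Real.add_one_le_exp (2*t); linarith
    have h3 : Real.exp (2*t) = Real.exp t * Real.exp t := by rw [← Real.exp_add]; ring_nf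
    have h4 : 0 < Real.exp (-t) := Real.exp_pos _
    have h5 : 0 < Real.exp t := Real.exp_pos _
    have h6 : 3 * Real.exp (-t) ≤ Real.exp t := by
      nlinarith
    linarith

private lemma coth_ge {t : ℝ} (ht : 0 < t) : 1 / min t 1 ≤ Real.cosh t / Real.sinh t := by
  have hs : 0 < Real.sinh t := by simpa using ht
  have hm : 0 < min t 1 := lt_min ht one_pos
  rw [div_le_div_iff₀ hm hs]
  rcases le_total t 1 with h | h
  · rw [min_eq_left h]
    simpa [mul_comm] using sinh_le_mul_cosh ht.le
  · rw [min_eq_right h, one_mul]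
    have h4 : 0 < Real.exp (-t) := Real.exp_pos _
    nlinarith [Real.sinh_eq t, Real.cosh_eq t]


private lemma core (N t nx ny a b : ℝ) (hN : 0 < N) (ht : 0 < t) (ha : 0 ≤ a) (hb : 0 ≤ b)
    (hnx : 0 ≤ nx) (hny : 0 ≤ ny) (hxa : nx ≤ a + b) (hyb : ny ≤ a + b) :
    Real.exp (-t) * Real.exp (-(min t 1 * a^2)/8) * Real.exp (-(b^2/min t 1)/8) *
      ((1 + Real.sqrt t * (1+nx))^N * (1 + Real.sqrt t * (1+ny))^N) ≤
    8^N * ((6*N)^(3*N) * ((16*N)^N * (16*N)^N)) * Real.exp 1 := by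
  set s := Real.sqrt t with hs_def
  have hs : 0 ≤ s := Real.sqrt_nonneg t
  have hs2 : s^2 = t := Real.sq_sqrt ht.le
  set m := min t 1 with hm_def
  have hm : 0 < m := lt_min ht one_pos
  have hm1 : m ≤ 1 := min_le_right t 1
  have hmt : m ≤ t := min_le_left t 1
  set M := (1+s)*((1+s*a)*(1+s*b)) with hM_def
  have h1M : 1 ≤ M := by
    nlinarith [mul_nonneg hs ha, mul_nonneg hs hb,
      mul_nonneg (mul_nonneg hs ha) (mul_nonneg hs hb)]
  have hAM : 1 + s*(1+nx) ≤ M := by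
    nlinarith [mul_nonneg hs (show (0:ℝ) ≤ a + b - nx by linarith),
      mul_nonneg (mul_nonneg hs hs) (mul_nonneg ha hb),
      mul_nonneg (mul_nonneg (mul_nonneg hs hs) hs) (mul_nonneg ha hb),
      mul_nonneg (mul_nonneg hs hs) ha, mul_nonneg (mul_nonneg hs hs) hb]
  have hBM : 1 + s*(1+ny) ≤ M := by
    nlinarith [mul_nonneg hs (show (0:ℝ) ≤ a + b - ny by linarith),
      mul_nonneg (mul_nonneg hs hs) (mul_nonneg ha hb),
      mul_nonneg (mul_nonneg (mul_nonneg hs hs) hs) (mul_nonneg ha hb),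
      mul_nonneg (mul_nonneg hs hs) ha, mul_nonneg (mul_nonneg hs hs) hb]
  have hA0 : (0:ℝ) ≤ 1 + s*(1+nx) := by nlinarith [mul_nonneg hs hnx]
  have hB0 : (0:ℝ) ≤ 1 + s*(1+ny) := by nlinarith [mul_nonneg hs hny]
  -- bound on A^N * B^N
  have hABM : (1 + s*(1+nx))^N * (1 + s*(1+ny))^N ≤ (M^2)^N := by
    calc (1 + s*(1+nx))^N * (1 + s*(1+ny))^N ≤ M^N * M^N :=
          mul_le_mul (Real.rpow_le_rpow hA0 hAM hN.le) (Real.rpow_le_rpow hB0 hBM hN.le)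
            (Real.rpow_nonneg hB0 N) (Real.rpow_nonneg (by linarith) N)
      _ = (M^2)^N := by rw [← Real.mul_rpow (by linarith) (by linarith), ← sq]
  have hM2 : M^2 ≤ 8*((1+t)^3*((1+m*a^2)*(1+b^2/m))) := by
    have k1 : (1+s)^2 ≤ 2*(1+t) := by nlinarith [sq_nonneg (s-1)]
    have k2 : (1+s*a)^2 ≤ 2*((1+t)*(1+m*a^2)) := by
      have k2a : (1+s*a)^2 ≤ 2*(1+t*a^2) := by nlinarith [sq_nonneg (s*a-1)]
      have k2b : 1+t*a^2 ≤ (1+t)*(1+m*a^2) := by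
        rcases le_total t 1 with h | h
        · rw [hm_def, min_eq_left h]; nlinarith [sq_nonneg a, mul_nonneg ht.le (sq_nonneg a)]
        · rw [hm_def, min_eq_right h]; nlinarith [sq_nonneg a]
      linarith
    have k3 : (1+s*b)^2 ≤ 2*((1+t)*(1+b^2/m)) := by
      have k3a : (1+s*b)^2 ≤ 2*(1+t*b^2) := by nlinarith [sq_nonneg (s*b-1)]
      have k3b : 1+t*b^2 ≤ (1+t)*(1+b^2/m) := by
        have hbm : 0 ≤ b^2/m := by positivity
        rcases le_total t 1 with h | h
        · rw [hm_def, min_eq_left h]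
          have h1 : b^2 ≤ b^2/t := by
            rw [le_div_iff₀ ht]; nlinarith [sq_nonneg b]
          nlinarith [sq_nonneg b]
        · rw [hm_def, min_eq_right h]
          simp only [div_one]
          nlinarith [sq_nonneg b]
      linarith
    calc M^2 = (1+s)^2 * ((1+s*a)^2 * (1+s*b)^2) := by rw [hM_def]; ring
      _ ≤ (2*(1+t)) * ((2*((1+t)*(1+m*a^2))) * (2*((1+t)*(1+b^2/m)))) := by
          apply mul_le_mul k1 (mul_le_mul k2 k3 (by positivity) (by positivity))
            (by positivity) (by positivity)
      _ = 8*((1+t)^3*((1+m*a^2)*(1+b^2/m))) := by ring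
  have hma : 0 ≤ m*a^2 := by positivity
  have hbm : 0 ≤ b^2/m := by positivity
  have hMN : (M^2)^N ≤ 8^N * ((1+t)^(3*N) * ((1+m*a^2)^N * (1+b^2/m)^N)) := by
    calc (M^2)^N ≤ (8*((1+t)^3*((1+m*a^2)*(1+b^2/m))))^N :=
          Real.rpow_le_rpow (by positivity) hM2 hN.le
      _ = 8^N * ((1+t)^(3*N) * ((1+m*a^2)^N * (1+b^2/m)^N)) := by
          rw [Real.mul_rpow (by norm_num) (by positivity),
            Real.mul_rpow (by positivity) (by positivity),
            Real.mul_rpow (by positivity) (by positivity)]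
          congr 2
          rw [← Real.rpow_natCast (1+t) 3, ← Real.rpow_mul (by linarith)]
          norm_num
  have hL1 : (1+t)^(3*N) ≤ (6*N)^(3*N) * Real.exp ((1/2)*(1+t)) := by
    have := rpow_le_exp_aux (a := 3*N) (ε := 1/2) (u := 1+t) (by linarith) (by norm_num)
      (by linarith)
    rw [show (3*N/(1/2) : ℝ) = 6*N by ring] at this
    exact this
  have hL2 : (1+m*a^2)^N ≤ (16*N)^N * Real.exp ((1/16)*(1+m*a^2)) := by
    have := rpow_le_exp_aux (a := N) (ε := 1/16) (u := 1+m*a^2) hN (by norm_num) (by linarith)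
    rw [show (N/(1/16) : ℝ) = 16*N by ring] at this
    exact this
  have hL3 : (1+b^2/m)^N ≤ (16*N)^N * Real.exp ((1/16)*(1+b^2/m)) := by
    have := rpow_le_exp_aux (a := N) (ε := 1/16) (u := 1+b^2/m) hN (by norm_num) (by linarith)
    rw [show (N/(1/16) : ℝ) = 16*N by ring] at this
    exact this
  have hK : (1 + s*(1+nx))^N * (1 + s*(1+ny))^N ≤
      8^N * ((6*N)^(3*N) * ((16*N)^N * (16*N)^N)) *
        Real.exp ((1/2)*(1+t) + ((1/16)*(1+m*a^2) + (1/16)*(1+b^2/m))) := by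
    calc (1 + s*(1+nx))^N * (1 + s*(1+ny))^N ≤ (M^2)^N := hABM
      _ ≤ 8^N * ((1+t)^(3*N) * ((1+m*a^2)^N * (1+b^2/m)^N)) := hMN
      _ ≤ 8^N * (((6*N)^(3*N) * Real.exp ((1/2)*(1+t))) *
            (((16*N)^N * Real.exp ((1/16)*(1+m*a^2))) *
             ((16*N)^N * Real.exp ((1/16)*(1+b^2/m))))) := by
          apply mul_le_mul_of_nonneg_left _ (by positivity)
          apply mul_le_mul hL1 (mul_le_mul hL2 hL3 (by positivity) (by positivity))
            (by positivity) (by positivity)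
      _ = 8^N * ((6*N)^(3*N) * ((16*N)^N * (16*N)^N)) *
            Real.exp ((1/2)*(1+t) + ((1/16)*(1+m*a^2) + (1/16)*(1+b^2/m))) := by
          rw [Real.exp_add, Real.exp_add]; ring
  calc Real.exp (-t) * Real.exp (-(m * a^2)/8) * Real.exp (-(b^2/m)/8) *
        ((1 + s*(1+nx))^N * (1 + s*(1+ny))^N)
      ≤ Real.exp (-t) * Real.exp (-(m * a^2)/8) * Real.exp (-(b^2/m)/8) *
        (8^N * ((6*N)^(3*N) * ((16*N)^N * (16*N)^N)) *
          Real.exp ((1/2)*(1+t) + ((1/16)*(1+m*a^2) + (1/16)*(1+b^2/m)))) :=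
        mul_le_mul_of_nonneg_left hK (by positivity)
    _ = 8^N * ((6*N)^(3*N) * ((16*N)^N * (16*N)^N)) *
        (Real.exp (-t) * Real.exp (-(m * a^2)/8) * Real.exp (-(b^2/m)/8) *
          Real.exp ((1/2)*(1+t) + ((1/16)*(1+m*a^2) + (1/16)*(1+b^2/m)))) := by
        ring
    _ ≤ 8^N * ((6*N)^(3*N) * ((16*N)^N * (16*N)^N)) * Real.exp 1 := by
        apply mul_le_mul_of_nonneg_left _ (by positivity)
        rw [← Real.exp_add, ← Real.exp_add, ← Real.exp_add]
        apply Real.exp_le_exp.mpr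
        linarith

/-- Gaussian upper bound for the Hermite heat kernel: there is `C > 0` such
that for every `N > 0` there is `C_N > 0` with
`0 ≤ g_t(x,y) ≤ C_N t^{-d/2} e^{-C|x-y|²/t} (1+√t/ρ(x))^{-N} (1+√t/ρ(y))^{-N}`. -/
theorem heat_kernel_gaussian_bound (d : ℕ) (hd : 3 ≤ d) :
    ∃ C : ℝ, 0 < C ∧
      ∀ N : ℝ, 0 < N → ∃ CN : ℝ, 0 < CN ∧
        ∀ t : ℝ, 0 < t → ∀ x y : Euc d,
          0 ≤ heatKernel t x y ∧
          heatKernel t x y ≤ CN * t ^ (-(d : ℝ) / 2) * Real.exp (-C * ‖x - y‖ ^ 2 / t) *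
            (1 + Real.sqrt t / rho x) ^ (-N) * (1 + Real.sqrt t / rho y) ^ (-N) := by
  refine ⟨1/8, by norm_num, fun N hN => ?_⟩
  refine ⟨(2*π)^(-(d:ℝ)/2) * (8^N * ((6*N)^(3*N) * ((16*N)^N * (16*N)^N)) * Real.exp 1),
    ?_, fun t ht x y => ?_⟩
  · have h6 : (0:ℝ) < 6*N := by linarith
    have h16 : (0:ℝ) < 16*N := by linarith
    positivity
  constructor
  · apply mul_nonneg
    · apply Real.rpow_nonneg
      have := Real.sinh_pos_iff.mpr (by linarith : (0:ℝ) < 2*t)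
      positivity
    · exact (Real.exp_pos _).le
  -- notation
  have hrx : Real.sqrt t / rho x = Real.sqrt t * (1 + ‖x‖) := by
    rw [rho]
    have : (0:ℝ) < 1 + ‖x‖ := by positivity
    field_simp
  have hry : Real.sqrt t / rho y = Real.sqrt t * (1 + ‖y‖) := by
    rw [rho]
    have : (0:ℝ) < 1 + ‖y‖ := by positivity
    field_simp
  rw [hrx, hry]
  set e2 : ℝ := -(d:ℝ)/2 with he2_def
  have hd3 : (3:ℝ) ≤ (d:ℝ) := by exact_mod_cast hd
  have he2 : e2 ≤ 0 := by rw [he2_def]; linarith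
  set P : ℝ := ‖x + y‖^2 with hP_def
  set Q : ℝ := ‖x - y‖^2 with hQ_def
  have hP : 0 ≤ P := sq_nonneg _
  have hQ : 0 ≤ Q := sq_nonneg _
  set m : ℝ := min t 1 with hm_def
  have hm : 0 < m := lt_min ht one_pos
  have hmt : m ≤ t := min_le_left t 1
  have h2π : (0:ℝ) < 2*π := by positivity
  set CN' : ℝ := 8^N * ((6*N)^(3*N) * ((16*N)^N * (16*N)^N)) * Real.exp 1 with hCN'_def
  have hCN' : 0 < CN' := by
    have h6 : (0:ℝ) < 6*N := by linarith
    have h16 : (0:ℝ) < 16*N := by linarith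
    rw [hCN'_def]; positivity
  -- Step S
  have hS : (2*π*Real.sinh (2*t))^e2 ≤ (2*π)^e2 * t^e2 * Real.exp (-t) := by
    have hsinh : t * Real.exp t ≤ Real.sinh (2*t) := sinh2_ge ht.le
    have hpos : 0 < 2*π*(t*Real.exp t) := by positivity
    have hstep : (2*π*Real.sinh (2*t))^e2 ≤ (2*π*(t*Real.exp t))^e2 :=
      Real.rpow_le_rpow_of_nonpos hpos (by nlinarith) he2
    have hsplit : (2*π*(t*Real.exp t))^e2 = (2*π)^e2 * (t^e2 * (Real.exp t)^e2) := by
      rw [Real.mul_rpow h2π.le (by positivity), Real.mul_rpow ht.le (Real.exp_pos t).le]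
    have hexp : (Real.exp t)^e2 ≤ Real.exp (-t) := by
      rw [← Real.exp_mul]
      apply Real.exp_le_exp.mpr
      rw [he2_def]
      nlinarith
    calc (2*π*Real.sinh (2*t))^e2 ≤ (2*π)^e2 * (t^e2 * (Real.exp t)^e2) := by
          rw [← hsplit]; exact hstep
      _ ≤ (2*π)^e2 * (t^e2 * Real.exp (-t)) := by
          apply mul_le_mul_of_nonneg_left _ (Real.rpow_nonneg h2π.le e2)
          exact mul_le_mul_of_nonneg_left hexp (Real.rpow_nonneg ht.le e2)
      _ = (2*π)^e2 * t^e2 * Real.exp (-t) := by ring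
  -- Step E
  have hE : Real.exp (-(1/4) * (P * Real.tanh t + Q * (Real.cosh t / Real.sinh t))) ≤
      Real.exp (-(m*P)/8) * Real.exp (-(Q/(8*t))) * Real.exp (-(Q/m)/8) := by
    rw [← Real.exp_add, ← Real.exp_add]
    apply Real.exp_le_exp.mpr
    have f1 : P * (m/2) ≤ P * Real.tanh t := mul_le_mul_of_nonneg_left (tanh_ge ht) hP
    have f2 : Q * (1/m) ≤ Q * (Real.cosh t / Real.sinh t) :=
      mul_le_mul_of_nonneg_left (coth_ge ht) hQ
    have f2' : Q/m ≤ Q * (Real.cosh t / Real.sinh t) := by rwa [mul_one_div] at f2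
    have f3 : Q/t ≤ Q/m := by
      apply div_le_div_of_nonneg_left hQ hm hmt
    have f4 : Q/(8*t) = (Q/t)/8 := by ring
    have f5 : -(1/4) * (P * Real.tanh t + Q * (Real.cosh t / Real.sinh t)) ≤
        -(1/4) * (P * (m/2) + Q/m) := by nlinarith
    rw [f4]
    nlinarith
  -- Step B
  have hA0 : (0:ℝ) < 1 + Real.sqrt t * (1 + ‖x‖) := by positivity
  have hB0 : (0:ℝ) < 1 + Real.sqrt t * (1 + ‖y‖) := by positivity
  have hstepB : Real.exp (-t) * Real.exp (-(m*P)/8) * Real.exp (-(Q/m)/8) ≤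
      CN' * (1 + Real.sqrt t * (1 + ‖x‖))^(-N) * (1 + Real.sqrt t * (1 + ‖y‖))^(-N) := by
    rw [Real.rpow_neg hA0.le, Real.rpow_neg hB0.le,
      show CN' * ((1 + Real.sqrt t * (1 + ‖x‖))^N)⁻¹ * ((1 + Real.sqrt t * (1 + ‖y‖))^N)⁻¹
        = CN' / ((1 + Real.sqrt t * (1 + ‖x‖))^N * (1 + Real.sqrt t * (1 + ‖y‖))^N) by ring,
      le_div_iff₀ (by positivity)]
    have hxa : ‖x‖ ≤ ‖x+y‖ + ‖x-y‖ := by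
      have h2 : x + x = (x+y) + (x-y) := by abel
      have h3 : ‖x + x‖ ≤ ‖x+y‖ + ‖x-y‖ := h2 ▸ norm_add_le _ _
      have h4 : ‖x + x‖ = 2 * ‖x‖ := by rw [← two_smul ℝ x, norm_smul]; simp
      have := norm_nonneg x
      linarith
    have hyb : ‖y‖ ≤ ‖x+y‖ + ‖x-y‖ := by
      have h2 : y + y = (x+y) - (x-y) := by abel
      have h3 : ‖y + y‖ ≤ ‖x+y‖ + ‖x-y‖ := h2 ▸ norm_sub_le _ _
      have h4 : ‖y + y‖ = 2 * ‖y‖ := by rw [← two_smul ℝ y, norm_smul]; simp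
      have := norm_nonneg y
      linarith
    have := core N t ‖x‖ ‖y‖ ‖x+y‖ ‖x-y‖ hN ht (norm_nonneg _) (norm_nonneg _)
      (norm_nonneg _) (norm_nonneg _) hxa hyb
    rw [hCN'_def]
    calc Real.exp (-t) * Real.exp (-(m*P)/8) * Real.exp (-(Q/m)/8) *
          ((1 + Real.sqrt t * (1 + ‖x‖))^N * (1 + Real.sqrt t * (1 + ‖y‖))^N)
        = Real.exp (-t) * Real.exp (-(min t 1 * ‖x+y‖^2)/8) *
            Real.exp (-(‖x-y‖^2/min t 1)/8) *
            ((1 + Real.sqrt t * (1 + ‖x‖))^N * (1 + Real.sqrt t * (1 + ‖y‖))^N) := by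
          rw [hm_def, hP_def, hQ_def]
      _ ≤ 8^N * ((6*N)^(3*N) * ((16*N)^N * (16*N)^N)) * Real.exp 1 := this
  -- Assembly
  calc heatKernel t x y
      = (2*π*Real.sinh (2*t))^e2 *
        Real.exp (-(1/4) * (P * Real.tanh t + Q * (Real.cosh t / Real.sinh t))) := rfl
    _ ≤ ((2*π)^e2 * t^e2 * Real.exp (-t)) *
        (Real.exp (-(m*P)/8) * Real.exp (-(Q/(8*t))) * Real.exp (-(Q/m)/8)) := by
        apply mul_le_mul hS hE (Real.exp_nonneg _)
        have h1 := Real.rpow_nonneg h2π.le e2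
        have h2 := Real.rpow_nonneg ht.le e2
        positivity
    _ = ((2*π)^e2 * t^e2 * Real.exp (-(Q/(8*t)))) *
        (Real.exp (-t) * Real.exp (-(m*P)/8) * Real.exp (-(Q/m)/8)) := by ring
    _ ≤ ((2*π)^e2 * t^e2 * Real.exp (-(Q/(8*t)))) *
        (CN' * (1 + Real.sqrt t * (1 + ‖x‖))^(-N) * (1 + Real.sqrt t * (1 + ‖y‖))^(-N)) := by
        apply mul_le_mul_of_nonneg_left hstepB
        have h1 := Real.rpow_nonneg h2π.le e2
        have h2 := Real.rpow_nonneg ht.le e2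
        positivity
    _ = (2*π)^e2 * CN' * t^e2 * Real.exp (-(Q/(8*t))) *
        (1 + Real.sqrt t * (1 + ‖x‖))^(-N) * (1 + Real.sqrt t * (1 + ‖y‖))^(-N) := by ring
    _ = (2*π)^e2 * CN' * t^e2 * Real.exp (-(1/8) * Q / t) *
        (1 + Real.sqrt t * (1 + ‖x‖))^(-N) * (1 + Real.sqrt t * (1 + ‖y‖))^(-N) := by
        rw [show -(Q/(8*t)) = -(1/8) * Q / t by ring]

end Hermite
end
end

section
/- Let H be a complex Hilbert space, (h_i)_{i∈I} an orthonormal basis of H, λ : I → (0,∞), and ψ : (0,∞) → ℂ a measurable function with c := ∫₀^∞ |ψ(u)|² du/u < ∞. For t > 0 and f ∈ H define ψ_t f = Σ_{i∈I} ψ(t√(λ_i)) ⟨f, h_i⟩ h_i. Then ∫₀^∞ ‖ψ_t f‖² dt/t = c · ‖f‖² for every f ∈ H. (In particular ψ(t) with |ψ(t)| ≤ C t^s/(1+t^{2s}) for some s > 0 satisfies the hypothesis.) -/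
open MeasureTheory Real Set ENNReal

noncomputable section

/-- Square-function identity for a spectral multiplier: if `(h_i)` is a
Hilbert (orthonormal) basis of a complex Hilbert space `H`, `λ_i > 0`, and `ψ : (0,∞) → ℂ`
is measurable with `c = ∫₀^∞ |ψ(u)|² du/u < ∞`, then for `ψ_t f = Σ_i ψ(t √λ_i) ⟨h_i, f⟩ h_i`
one has `∫₀^∞ ‖ψ_t f‖² dt/t = c ‖f‖²` for every `f ∈ H`. -/
theorem square_function_identity {I : Type*} {H : Type*} [NormedAddCommGroup H]
    [InnerProductSpace ℂ H] [CompleteSpace H]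
    (b : HilbertBasis I ℂ H) (lam : I → ℝ) (hlam : ∀ i, 0 < lam i)
    (ψ : ℝ → ℂ) (hψ : Measurable ψ) (c : ℝ) (hc0 : 0 ≤ c)
    (hc : ∫⁻ u in Ioi (0 : ℝ), ENNReal.ofReal (‖ψ u‖ ^ 2 / u) = ENNReal.ofReal c)
    (f : H) :
    ∫⁻ t in Ioi (0 : ℝ),
        ENNReal.ofReal (‖∑' i, (ψ (t * Real.sqrt (lam i)) * b.repr f i) • b i‖ ^ 2 / t)
      = ENNReal.ofReal (c * ‖f‖ ^ 2) := by
  classical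
  set a : I → ℂ := fun i => b.repr f i with ha
  -- square-summability of the coefficients
  have hA : Summable fun i => ‖a i‖ ^ 2 := by
    have := (lp.memℓp (b.repr f)).summable (p := 2) (by norm_num)
    simpa [ha, ENNReal.toReal_ofNat, Real.rpow_natCast] using this
  have hnorm : ∑' i, ‖a i‖ ^ 2 = ‖f‖ ^ 2 := by
    have h1 : ‖b.repr f‖ ^ ((2 : ℝ≥0∞).toReal) = ∑' i, ‖b.repr f i‖ ^ ((2 : ℝ≥0∞).toReal) :=
      lp.norm_rpow_eq_tsum (by norm_num) (b.repr f)
    have h2 : ‖b.repr f‖ = ‖f‖ := b.repr.norm_map f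
    simpa [ha, h2, ENNReal.toReal_ofNat, Real.rpow_natCast] using h1.symm
  -- Parseval for square-summable coefficient families
  have parseval : ∀ v : I → ℂ, Summable (fun i => ‖v i‖ ^ 2) →
      ‖∑' i, v i • b i‖ ^ 2 = ∑' i, ‖v i‖ ^ 2 := by
    intro v hv
    have hv2 : Summable (fun i => ‖v i‖ ^ ((2 : ℝ≥0∞).toReal)) := by
      simpa [ENNReal.toReal_ofNat, Real.rpow_natCast] using hv
    have hmem : Memℓp v 2 := memℓp_gen hv2
    set g : lp (fun _ : I => ℂ) 2 := ⟨v, hmem⟩ with hg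
    have hsum : HasSum (fun i => v i • b i) (b.repr.symm g) := by
      simpa using b.hasSum_repr_symm g
    rw [hsum.tsum_eq]
    have hn : ‖(b.repr.symm g : H)‖ = ‖g‖ := b.repr.symm.norm_map g
    have h3 : ‖g‖ ^ ((2 : ℝ≥0∞).toReal) = ∑' i, ‖v i‖ ^ ((2 : ℝ≥0∞).toReal) :=
      lp.norm_rpow_eq_tsum (by norm_num) g
    rw [hn]
    simpa [ENNReal.toReal_ofNat, Real.rpow_natCast] using h3
  -- scaling invariance of dt/t type integrals
  have hscale : ∀ (Φ : ℝ → ℝ≥0∞), Measurable Φ → ∀ s : ℝ, 0 < s →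
      ∫⁻ t in Ioi (0:ℝ), Φ (t * s) = ENNReal.ofReal s⁻¹ * ∫⁻ u in Ioi (0:ℝ), Φ u := by
    intro Φ hΦ s hs
    have hmeas : Measurable fun t : ℝ => t * s := measurable_id.mul_const s
    have hpre : (fun t : ℝ => t * s) ⁻¹' Ioi 0 = Ioi 0 := by
      ext t
      simp only [mem_preimage, mem_Ioi]
      constructor
      · intro h; by_contra h'; push_neg at h'; nlinarith
      · intro h; exact mul_pos h hs
    have hmap : Measure.map (fun t : ℝ => t * s) (volume.restrict (Ioi 0))
        = (ENNReal.ofReal s⁻¹) • volume.restrict (Ioi 0) := by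
      have h1 := Measure.restrict_map (μ := volume) hmeas (measurableSet_Ioi (a := (0:ℝ)))
      rw [hpre] at h1
      rw [← h1, Real.map_volume_mul_right hs.ne', Measure.restrict_smul,
        abs_of_pos (inv_pos.mpr hs)]
    rw [← lintegral_map hΦ hmeas, hmap, lintegral_smul_measure, smul_eq_mul]
  -- measurability of the basic ENNReal-valued functions
  have hΦmeas : Measurable fun u : ℝ => ENNReal.ofReal (‖ψ u‖ ^ 2 / u) :=
    (((hψ.norm.pow_const 2).div measurable_id)).ennreal_ofReal
  have hFimeas : ∀ i : I, Measurable fun t : ℝ =>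
      ENNReal.ofReal (‖ψ (t * Real.sqrt (lam i))‖ ^ 2 * ‖a i‖ ^ 2 / t) := by
    intro i
    exact ((((hψ.comp (measurable_id.mul_const _)).norm.pow_const 2).mul_const _).div
      measurable_id).ennreal_ofReal
  -- per-index integral computation
  have hInt : ∀ i : I, (∫⁻ t in Ioi (0:ℝ),
      ENNReal.ofReal (‖ψ (t * Real.sqrt (lam i))‖ ^ 2 * ‖a i‖ ^ 2 / t))
      = ENNReal.ofReal (c * ‖a i‖ ^ 2) := by
    intro i
    set s : ℝ := Real.sqrt (lam i) with hsdef
    have hs : 0 < s := Real.sqrt_pos.mpr (hlam i)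
    have hptwise : ∀ t ∈ Ioi (0:ℝ),
        ENNReal.ofReal (‖ψ (t * s)‖ ^ 2 * ‖a i‖ ^ 2 / t)
          = (ENNReal.ofReal (‖ψ (t * s)‖ ^ 2 / (t * s))) *
              (ENNReal.ofReal s * ENNReal.ofReal (‖a i‖ ^ 2)) := by
      intro t ht
      have ht0 : 0 < t := ht
      rw [← ENNReal.ofReal_mul (by positivity), ← ENNReal.ofReal_mul (by positivity)]
      congr 1
      field_simp
    rw [setLIntegral_congr_fun measurableSet_Ioi hptwise]
    have hm : Measurable fun x : ℝ => ENNReal.ofReal (‖ψ (x * s)‖ ^ 2 / (x * s)) :=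
      hΦmeas.comp (measurable_id.mul_const s)
    rw [lintegral_mul_const _ hm]
    rw [hscale _ hΦmeas s hs, hc]
    rw [mul_assoc, ← mul_assoc (ENNReal.ofReal c), mul_comm (ENNReal.ofReal c)]
    rw [← mul_assoc, ← mul_assoc, ← ENNReal.ofReal_mul (by positivity),
      inv_mul_cancel₀ hs.ne', ENNReal.ofReal_one, one_mul,
      ← ENNReal.ofReal_mul hc0]
  -- countable support
  set S : Set I := Function.support fun i => ‖a i‖ ^ 2 with hS
  have hScount : S.Countable := hA.countable_support
  haveI : Countable S := hScount.to_subtype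
  have hsupp : ∀ t : ℝ, (Function.support fun i : I =>
      ENNReal.ofReal (‖ψ (t * Real.sqrt (lam i))‖ ^ 2 * ‖a i‖ ^ 2 / t)) ⊆ S := by
    intro t i hi
    rw [Function.mem_support] at hi
    rw [hS, Function.mem_support]
    intro h0
    apply hi
    have h0' : ‖a i‖ ^ 2 = 0 := h0
    rw [h0', mul_zero, zero_div, ENNReal.ofReal_zero]
  -- the scalar-valued majorant
  set G : ℝ → ℝ≥0∞ := fun t =>
    ∑' i : I, ENNReal.ofReal (‖ψ (t * Real.sqrt (lam i))‖ ^ 2 * ‖a i‖ ^ 2 / t) with hG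
  have hGS : ∀ t : ℝ, G t = ∑' i : S,
      ENNReal.ofReal (‖ψ (t * Real.sqrt (lam i))‖ ^ 2 * ‖a i‖ ^ 2 / t) := by
    intro t
    exact (tsum_subtype_eq_of_support_subset (hsupp t)).symm
  have hGmeas : Measurable G := by
    have : Measurable fun t : ℝ => ∑' i : S,
        ENNReal.ofReal (‖ψ (t * Real.sqrt (lam i))‖ ^ 2 * ‖a i‖ ^ 2 / t) :=
      Measurable.ennreal_tsum fun i => hFimeas i
    simpa [funext hGS] using this
  -- integral of G
  have hGint : ∫⁻ t in Ioi (0:ℝ), G t = ENNReal.ofReal (c * ‖f‖ ^ 2) := by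
    have h1 : ∫⁻ t in Ioi (0:ℝ), G t = ∑' i : S, ∫⁻ t in Ioi (0:ℝ),
        ENNReal.ofReal (‖ψ (t * Real.sqrt (lam i))‖ ^ 2 * ‖a i‖ ^ 2 / t) := by
      rw [funext hGS]
      exact lintegral_tsum fun i => (hFimeas i).aemeasurable
    rw [h1]
    have h2 : ∀ i : S, (∫⁻ t in Ioi (0:ℝ),
        ENNReal.ofReal (‖ψ (t * Real.sqrt (lam i))‖ ^ 2 * ‖a i‖ ^ 2 / t))
        = ENNReal.ofReal (c * ‖a i‖ ^ 2) := fun i => hInt i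
    rw [tsum_congr h2]
    have h3 : (Function.support fun i : I => ENNReal.ofReal (c * ‖a i‖ ^ 2)) ⊆ S := by
      intro i hi
      rw [Function.mem_support] at hi
      rw [hS, Function.mem_support]
      intro h0
      apply hi
      have h0' : ‖a i‖ ^ 2 = 0 := h0
      rw [h0', mul_zero, ENNReal.ofReal_zero]
    rw [tsum_subtype_eq_of_support_subset h3]
    rw [← ENNReal.ofReal_tsum_of_nonneg (fun i => by positivity) (hA.mul_left c)]
    rw [tsum_mul_left, hnorm]
  -- a.e. finiteness of G, hence a.e. summability
  have hae : ∀ᵐ t ∂(volume.restrict (Ioi (0:ℝ))),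
      ENNReal.ofReal (‖∑' i, (ψ (t * Real.sqrt (lam i)) * a i) • b i‖ ^ 2 / t) = G t := by
    have hfin : ∀ᵐ t ∂(volume.restrict (Ioi (0:ℝ))), G t < ⊤ :=
      ae_lt_top hGmeas (by rw [hGint]; exact ENNReal.ofReal_ne_top)
    filter_upwards [hfin, ae_restrict_mem measurableSet_Ioi] with t hGt ht
    have ht0 : (0:ℝ) < t := ht
    -- summability of the coefficient squares at this t
    have hsum0 : Summable fun i : I =>
        (ENNReal.ofReal (‖ψ (t * Real.sqrt (lam i))‖ ^ 2 * ‖a i‖ ^ 2 / t)).toReal :=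
      ENNReal.summable_toReal hGt.ne
    have hsum1 : Summable fun i : I => ‖ψ (t * Real.sqrt (lam i))‖ ^ 2 * ‖a i‖ ^ 2 / t := by
      refine hsum0.congr fun i => ?_
      rw [ENNReal.toReal_ofReal (by positivity)]
    have hsum2 : Summable fun i : I => ‖ψ (t * Real.sqrt (lam i))‖ ^ 2 * ‖a i‖ ^ 2 := by
      have := hsum1.mul_right t
      refine this.congr fun i => ?_
      field_simp
    have hsum3 : Summable fun i : I => ‖ψ (t * Real.sqrt (lam i)) * a i‖ ^ 2 := by
      refine hsum2.congr fun i => ?_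
      rw [norm_mul, mul_pow]
    rw [parseval _ hsum3]
    have heq : ∀ i : I, ‖ψ (t * Real.sqrt (lam i)) * a i‖ ^ 2
        = ‖ψ (t * Real.sqrt (lam i))‖ ^ 2 * ‖a i‖ ^ 2 := fun i => by
      rw [norm_mul, mul_pow]
    rw [tsum_congr heq, ← tsum_div_const]
    rw [ENNReal.ofReal_tsum_of_nonneg (fun i => by positivity) (hsum2.div_const t)]
  calc ∫⁻ t in Ioi (0:ℝ),
        ENNReal.ofReal (‖∑' i, (ψ (t * Real.sqrt (lam i)) * b.repr f i) • b i‖ ^ 2 / t)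
      = ∫⁻ t in Ioi (0:ℝ), G t := lintegral_congr_ae hae
    _ = ENNReal.ofReal (c * ‖f‖ ^ 2) := hGint
end
end
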